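/- Let n ≥ 1 and k ≥ 1 be natural numbers and let f : Fin n → ℕ satisfy f(i) ≥ 1 for all i; set t = ∑_{i} f(i). Define f_k : Fin (n+k+2) → ℕ by f_k(i) = f(i) for the first n indices, f_k(i) = t for the next k+1 indices, and f_k(i) = (k+1)·t for the last index. Then the number of subsets S ⊆ Fin (n+k+2) with 2|S| = n + k + 2 that are equal-sum subsets for f_k equals the number of subsets S ⊆ Fin n that are equal-sum subsets for f and satisfy either |S| + k = |Sᶜ| or |Sᶜ| + k = |S| (where Sᶜ is the complement of S in Fin n). -/

import Mathlib

/-!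
Split the indices of the padded family into the `n` original ones, the `k + 1` middle ones of
weight `t` and the top one of weight `(k + 1) t`. A subset `S` then has weight `F + c t`, where
`F ≤ t` is the weight of its original part `T` and `c` counts its middle indices, plus `k + 1`
if it contains the top one. The total weight is `(2k + 3) t`, so `S` is equal-sum iff
`2F + 2ct = (2k + 3) t`, and since `0 < t` and `2F ≤ 2t` this forces `c = k + 1` and `2F = t`.
Thus `S` contains either the top index and no middle one, or every middle index but not the top
one, and `2|S| = n + k + 2` becomes `2|T| = n + k`, resp. `2|T| + k = n`. As `k ≥ 1` these cases
are exclusive, so `S ↦ T` is a bijection onto the equal-sum subsets of `f` whose size differs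
from that of their complement by `k`.
-/

open Finset

def IsEqualSum {ι : Type*} [Fintype ι] [DecidableEq ι] (g : ι → ℕ) (S : Finset ι) : Prop :=
  ∑ i ∈ S, g i = ∑ i ∈ Sᶜ, g i

def IsEqualSizeEqualSum {N : ℕ} (g : Fin N → ℕ) (S : Finset (Fin N)) : Prop :=
  2 * #S = N ∧ IsEqualSum g S

def IsEqualSumWithSizeGap {ι : Type*} [Fintype ι] [DecidableEq ι] (k : ℕ) (g : ι → ℕ)
    (T : Finset ι) : Prop :=
  IsEqualSum g T ∧ (#T + k = #Tᶜ ∨ #Tᶜ + k = #T)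

theorem isEqualSum_iff {ι : Type*} [Fintype ι] [DecidableEq ι] {g : ι → ℕ} {S : Finset ι} :
    IsEqualSum g S ↔ 2 * ∑ i ∈ S, g i = ∑ i, g i := by
  rw [IsEqualSum, ← sum_add_sum_compl S g]
  omega

theorem card_add_eq_card_compl_or_iff {ι : Type*} [Fintype ι] [DecidableEq ι] (k : ℕ)
    (T : Finset ι) :
    (#T + k = #Tᶜ ∨ #Tᶜ + k = #T) ↔
      (2 * #T + k = Fintype.card ι ∨ 2 * #T = Fintype.card ι + k) := by
  have := T.card_le_univ
  rw [card_compl]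
  omega

theorem eq_of_two_mul_add_mul_eq {F c k t : ℕ} (ht : 0 < t) (hF : F ≤ t)
    (h : 2 * (F + c * t) = (2 * k + 3) * t) : 2 * F = t ∧ c = k + 1 := by
  have hc : c = k + 1 := by
    rcases lt_trichotomy c (k + 1) with hlt | heq | hgt
    · nlinarith
    · exact heq
    · nlinarith
  subst hc
  constructor <;> nlinarith

namespace PaddedPartition

variable {n k : ℕ}

def lowEmb (n k : ℕ) : Fin n ↪ Fin (n + k + 2) :=
  ⟨fun j => (Fin.castAdd (k + 1) j).castSucc, fun _ _ h => by simpa [Fin.ext_iff] using h⟩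

def midEmb (n k : ℕ) : Fin (k + 1) ↪ Fin (n + k + 2) :=
  ⟨fun j => (Fin.natAdd n j).castSucc, fun _ _ h => by simpa [Fin.ext_iff] using h⟩

def top (n k : ℕ) : Fin (n + k + 2) := Fin.last _

@[simp] theorem lowEmb_val (j : Fin n) : (lowEmb n k j : ℕ) = j := rfl

@[simp] theorem midEmb_val (j : Fin (k + 1)) : (midEmb n k j : ℕ) = n + j := rfl

@[simp] theorem top_val : (top n k : ℕ) = n + k + 1 := rfl

@[simp] theorem lowEmb_ne_midEmb (j : Fin n) (j' : Fin (k + 1)) :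
    lowEmb n k j ≠ midEmb n k j' := by
  simp [Fin.ext_iff]
  omega

@[simp] theorem lowEmb_ne_top (j : Fin n) : lowEmb n k j ≠ top n k := by
  simp [Fin.ext_iff]
  omega

@[simp] theorem midEmb_ne_top (j : Fin (k + 1)) : midEmb n k j ≠ top n k := by
  simp [Fin.ext_iff]
  omega

theorem exists_lowEmb_or_exists_midEmb_or_eq_top (i : Fin (n + k + 2)) :
    (∃ j, lowEmb n k j = i) ∨ (∃ j, midEmb n k j = i) ∨ i = top n k := by
  induction i using Fin.lastCases with
  | last => exact Or.inr (Or.inr rfl)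
  | cast i =>
    induction i using @Fin.addCases n (k + 1) with
    | left j => exact Or.inl ⟨j, rfl⟩
    | right j => exact Or.inr (Or.inl ⟨j, rfl⟩)

def lowPart (S : Finset (Fin (n + k + 2))) : Finset (Fin n) := {j | lowEmb n k j ∈ S}

def midPart (S : Finset (Fin (n + k + 2))) : Finset (Fin (k + 1)) := {j | midEmb n k j ∈ S}

theorem ext_of_parts {S S' : Finset (Fin (n + k + 2))} (hlow : lowPart S = lowPart S')
    (hmid : midPart S = midPart S') (htop : top n k ∈ S ↔ top n k ∈ S') : S = S' := by
  ext i
  rcases exists_lowEmb_or_exists_midEmb_or_eq_top i with ⟨j, rfl⟩ | ⟨j, rfl⟩ | rfl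
  · simpa [lowPart] using Finset.ext_iff.1 hlow j
  · simpa [midPart] using Finset.ext_iff.1 hmid j
  · exact htop

theorem sum_eq_sum_lowPart_add {M : Type*} [AddCommMonoid M] (g : Fin (n + k + 2) → M)
    (S : Finset (Fin (n + k + 2))) :
    ∑ i ∈ S, g i = ∑ j ∈ lowPart S, g (lowEmb n k j) + ∑ j ∈ midPart S, g (midEmb n k j)
      + if top n k ∈ S then g (top n k) else 0 := by
  calc ∑ i ∈ S, g i = ∑ i, if i ∈ S then g i else 0 := by rw [sum_ite_mem, univ_inter]
    _ = _ := (Fin.sum_univ_castSucc _).trans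
      (congrArg (· + _) (Fin.sum_univ_add (a := n) (b := k + 1) _))
    _ = _ := by rw [lowPart, midPart, sum_filter, sum_filter]; rfl

theorem card_eq_card_lowPart_add (S : Finset (Fin (n + k + 2))) :
    #S = #(lowPart S) + #(midPart S) + if top n k ∈ S then 1 else 0 := by
  simpa only [card_eq_sum_ones] using sum_eq_sum_lowPart_add (fun _ => 1) S

def lift (k : ℕ) (T : Finset (Fin n)) : Finset (Fin (n + k + 2)) :=
  T.map (lowEmb n k) ∪ if 2 * #T = n + k then {top n k} else univ.map (midEmb n k)

theorem lowPart_lift (T : Finset (Fin n)) : lowPart (lift k T) = T := by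
  ext j
  simp only [lowPart, lift, mem_filter_univ, mem_union, mem_map']
  split_ifs <;> simp [(lowEmb_ne_midEmb j _).symm]

theorem midPart_lift (T : Finset (Fin n)) :
    midPart (lift k T) = if 2 * #T = n + k then ∅ else univ := by
  ext j
  simp only [midPart, lift, mem_filter_univ, mem_union]
  split_ifs <;> simp

theorem top_mem_lift_iff (T : Finset (Fin n)) : top n k ∈ lift k T ↔ 2 * #T = n + k := by
  rw [lift]
  split_ifs <;> simp [*]

def pad (f : Fin n → ℕ) (k t : ℕ) (i : Fin (n + k + 2)) : ℕ :=
  if h : (i : ℕ) < n then f ⟨i, h⟩ else if (i : ℕ) < n + k + 1 then t else (k + 1) * t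

section pad

variable (f : Fin n → ℕ) {t : ℕ}

@[simp] theorem pad_lowEmb (j : Fin n) : pad f k t (lowEmb n k j) = f j := by
  simp [pad]

@[simp] theorem pad_midEmb (j : Fin (k + 1)) : pad f k t (midEmb n k j) = t := by
  simp [pad]
  omega

@[simp] theorem pad_top : pad f k t (top n k) = (k + 1) * t := by
  rw [pad, dif_neg (by simp only [top_val]; omega), if_neg (by simp)]

theorem sum_pad (S : Finset (Fin (n + k + 2))) :
    ∑ i ∈ S, pad f k t i
      = ∑ j ∈ lowPart S, f j + (#(midPart S) + if top n k ∈ S then k + 1 else 0) * t := by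
  simp only [sum_eq_sum_lowPart_add, pad_lowEmb, pad_midEmb, pad_top, sum_const, smul_eq_mul]
  split_ifs <;> ring

theorem sum_pad_univ (ht : ∑ i, f i = t) : ∑ i, pad f k t i = (2 * k + 3) * t := by
  rw [sum_pad]
  simp [lowPart, midPart, ht]
  ring

theorem IsEqualSizeEqualSum.parts (ht : ∑ i, f i = t) (htpos : 0 < t) (hk : 1 ≤ k)
    {S : Finset (Fin (n + k + 2))} (hS : IsEqualSizeEqualSum (pad f k t) S) :
    2 * ∑ j ∈ lowPart S, f j = t ∧
      (2 * #(lowPart S) + k = n ∨ 2 * #(lowPart S) = n + k) ∧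
      (top n k ∈ S ↔ 2 * #(lowPart S) = n + k) ∧
      midPart S = if 2 * #(lowPart S) = n + k then ∅ else univ := by
  obtain ⟨hcard, hsum⟩ := hS
  rw [isEqualSum_iff, sum_pad, sum_pad_univ f ht] at hsum
  rw [card_eq_card_lowPart_add] at hcard
  have hFt : ∑ j ∈ lowPart S, f j ≤ t := ht ▸ sum_le_sum_of_subset (subset_univ _)
  obtain ⟨hF, hc⟩ := eq_of_two_mul_add_mul_eq htpos hFt hsum
  refine ⟨hF, ?_⟩
  by_cases htop : top n k ∈ S <;> simp only [htop, if_true, if_false, add_zero] at hc hcard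
  · have hT : 2 * #(lowPart S) = n + k := by omega
    simp [htop, hT, card_eq_zero.1 (by omega : #(midPart S) = 0)]
  · have hT : ¬2 * #(lowPart S) = n + k := by omega
    simp [htop, hT, eq_univ_of_card (midPart S) (by simpa using hc)]
    omega

theorem IsEqualSizeEqualSum.isEqualSumWithSizeGap_lowPart (ht : ∑ i, f i = t) (htpos : 0 < t)
    (hk : 1 ≤ k) {S : Finset (Fin (n + k + 2))} (hS : IsEqualSizeEqualSum (pad f k t) S) :
    IsEqualSumWithSizeGap k f (lowPart S) := by
  obtain ⟨hF, hcard, -⟩ := IsEqualSizeEqualSum.parts f ht htpos hk hS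
  exact ⟨isEqualSum_iff.2 (ht ▸ hF),
    (card_add_eq_card_compl_or_iff k _).2 (by simpa only [Fintype.card_fin] using hcard)⟩

theorem IsEqualSizeEqualSum.lift_lowPart (ht : ∑ i, f i = t) (htpos : 0 < t) (hk : 1 ≤ k)
    {S : Finset (Fin (n + k + 2))} (hS : IsEqualSizeEqualSum (pad f k t) S) :
    lift k (lowPart S) = S := by
  obtain ⟨-, -, htop, hmid⟩ := IsEqualSizeEqualSum.parts f ht htpos hk hS
  exact ext_of_parts (lowPart_lift _) (by rw [midPart_lift, hmid])
    (by rw [top_mem_lift_iff, htop])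

theorem IsEqualSumWithSizeGap.isEqualSizeEqualSum_lift (ht : ∑ i, f i = t)
    {T : Finset (Fin n)} (hT : IsEqualSumWithSizeGap k f T) :
    IsEqualSizeEqualSum (pad f k t) (lift k T) := by
  obtain ⟨hsum, hcard⟩ := hT
  rw [card_add_eq_card_compl_or_iff, Fintype.card_fin] at hcard
  rw [isEqualSum_iff, ht] at hsum
  subst hsum
  rw [IsEqualSizeEqualSum, card_eq_card_lowPart_add, isEqualSum_iff, sum_pad, sum_pad_univ f ht,
    lowPart_lift, midPart_lift]
  by_cases h : 2 * #T = n + k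
  · simp only [h, top_mem_lift_iff, if_true, card_empty]
    exact ⟨by omega, by ring⟩
  · simp only [h, top_mem_lift_iff, if_false, card_univ, Fintype.card_fin]
    exact ⟨by omega, by ring⟩

end pad

end PaddedPartition

open PaddedPartition in
/-- Let `n, k ≥ 1`, `f : Fin n → ℕ` with `f i ≥ 1`, and `t = ∑ f i`.  Define
`fk : Fin (n+k+2) → ℕ` agreeing with `f` on the first `n` indices, equal to `t` on the next
`k+1` indices, and equal to `(k+1)·t` on the last index.  Then the number of subsets `S` with
`2|S| = n+k+2` which are equal-sum for `fk` equals the number of equal-sum subsets `S ⊆ Fin n`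
for `f` satisfying `|S| + k = |Sᶜ|` or `|Sᶜ| + k = |S|`. -/
theorem stmt8 (n k : ℕ) (hn : 1 ≤ n) (hk : 1 ≤ k) (f : Fin n → ℕ) (hf : ∀ i, 1 ≤ f i)
    (t : ℕ) (ht : t = ∑ i, f i)
    (fk : Fin (n + k + 2) → ℕ)
    (hfk : ∀ i : Fin (n + k + 2),
      fk i = if h : (i : ℕ) < n then f ⟨i, h⟩
        else if (i : ℕ) < n + k + 1 then t else (k + 1) * t) :
    (Finset.univ.filter
        (fun S : Finset (Fin (n + k + 2)) =>
          2 * S.card = n + k + 2 ∧ ∑ i ∈ S, fk i = ∑ i ∈ Sᶜ, fk i)).card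
      = (Finset.univ.filter
          (fun S : Finset (Fin n) =>
            (∑ i ∈ S, f i = ∑ i ∈ Sᶜ, f i) ∧
              (S.card + k = Sᶜ.card ∨ Sᶜ.card + k = S.card))).card := by
  obtain rfl : fk = pad f k t := funext hfk
  have htpos : 0 < t := ht ▸ sum_pos (fun i _ => hf i) ⟨⟨0, hn⟩, mem_univ _⟩
  refine card_nbij' lowPart (lift k) (fun S hS => ?_) (fun T hT => ?_) (fun S hS => ?_)
    (fun T _ => lowPart_lift T)
  · exact mem_filter.2 ⟨mem_univ _, IsEqualSizeEqualSum.isEqualSumWithSizeGap_lowPart f ht.symm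
      htpos hk (mem_filter.1 hS).2⟩
  · exact mem_filter.2 ⟨mem_univ _,
      IsEqualSumWithSizeGap.isEqualSizeEqualSum_lift f ht.symm (mem_filter.1 hT).2⟩
  · exact IsEqualSizeEqualSum.lift_lowPart f ht.symm htpos hk (mem_filter.1 hS).2
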